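/- For every ε>0 there exist constants c'_ε, c''_ε > 0 such that for all n ∈ ℕ, ℙ[ ℙ_𝓛[ min_{|u| = n} V(u) ≤ −c'_ε n ] ≤ e^{−c''_ε n} ] ≥ 1 − ε. -/

import Mathlib

noncomputable section

/-- The data of a branching random walk in time-inhomogeneous random environment
(BRWre): an i.i.d. integer-valued environment `(𝓛_k)_{k≥1}` with `𝓛_1 ≥ 2` a.s. and
`Var[log 𝓛_1] < ∞`, a quenched law `ℙ_𝓛` (a Markov kernel in the environment) under
which the displacements attached to the vertices of the genealogical tree are i.i.d.
standard Gaussians, together with a driving Brownian motion `B` (independent of the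
displacements) used to define the barrier probabilities `p_t`. -/
structure BRWre where
  /-- sample space of the environment -/
  Ωe : Type
  [mΩe : MeasurableSpace Ωe]
  /-- the law `ℙ` of the environment -/
  Pe : MeasureTheory.Measure Ωe
  [hPe : MeasureTheory.IsProbabilityMeasure Pe]
  /-- the environment `(𝓛_k)_{k ≥ 1}` of offspring numbers -/
  L : ℕ → Ωe → ℕ
  hLmeas : ∀ k, Measurable (L k)
  /-- the `𝓛_k` are independent -/
  hLindep : ProbabilityTheory.iIndepFun L Pe
  /-- the `𝓛_k` are identically distributed -/
  hLident : ∀ k, ProbabilityTheory.IdentDistrib (L k) (L 1) Pe Pe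
  /-- `𝓛_1 ≥ 2` a.s. -/
  hL2 : ∀ᵐ ω ∂Pe, 2 ≤ L 1 ω
  /-- `Var[log 𝓛_1] < ∞` -/
  hLvar : MeasureTheory.MemLp (fun ω => Real.log (L 1 ω)) 2 Pe
  /-- sample space of the quenched randomness -/
  Ωq : Type
  [mΩq : MeasurableSpace Ωq]
  /-- the quenched laws `ℙ_𝓛`, as a kernel in the environment -/
  PL : ProbabilityTheory.Kernel Ωe Ωq
  [hPL : ProbabilityTheory.IsMarkovKernel PL]
  /-- the displacements attached to the vertices of the genealogical tree, the
  vertices being indexed by finite sequences of integers -/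
  ξ : List ℕ → Ωq → ℝ
  hξmeas : ∀ u, Measurable (ξ u)
  /-- quenched, the displacements are independent ... -/
  hξindep : ∀ ω, ProbabilityTheory.iIndepFun ξ (PL ω)
  /-- ... standard Gaussians -/
  hξgauss : ∀ ω u, (PL ω).map (ξ u) = ProbabilityTheory.gaussianReal 0 1
  /-- a Brownian motion under the quenched law -/
  B : ℝ → Ωq → ℝ
  hBmeas : ∀ s, Measurable (B s)
  hB0 : ∀ ω, ∀ᵐ ωq ∂PL ω, B 0 ωq = 0
  hBcont : ∀ ω, ∀ᵐ ωq ∂PL ω, Continuous fun s => B s ωq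
  hBgauss : ∀ ω, ∀ s t : ℝ, 0 ≤ s → s ≤ t →
    (PL ω).map (fun ωq => B t ωq - B s ωq) =
      ProbabilityTheory.gaussianReal 0 (Real.toNNReal (t - s))
  hBincr : ∀ ω (n : ℕ) (τ : Fin (n + 1) → ℝ), Monotone τ → (∀ i, 0 ≤ τ i) →
    ProbabilityTheory.iIndepFun
      (fun i : Fin n => fun ωq => B (τ i.succ) ωq - B (τ i.castSucc) ωq) (PL ω)
  /-- the Brownian motion is independent of the displacements -/
  hBindep : ∀ ω (s : ℝ) (u : List ℕ), ProbabilityTheory.IndepFun (B s) (ξ u) (PL ω)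

open MeasureTheory ProbabilityTheory Filter Set
open scoped ProbabilityTheory

namespace BRWre

variable (X : BRWre)

instance : MeasurableSpace X.Ωe := X.mΩe
instance : MeasurableSpace X.Ωq := X.mΩq
instance : IsProbabilityMeasure X.Pe := X.hPe
instance : IsMarkovKernel X.PL := X.hPL

/-- `θ* = sqrt(2 𝔼[log 𝓛_1])` -/
def θ : ℝ := Real.sqrt (2 * ∫ ω, Real.log (X.L 1 ω) ∂X.Pe)

/-- `K_n = Σ_{k=1}^n κ_k(θ*) = Σ_{k=1}^n (log 𝓛_k + θ*²/2)` -/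
def K (n : ℕ) (ω : X.Ωe) : ℝ :=
  ∑ k ∈ Finset.Icc 1 n, (Real.log (X.L k ω) + X.θ ^ 2 / 2)

/-- the linear interpolation `W_s` of `W_n = K_n/θ* − nθ*` -/
def W (s : ℝ) (ω : X.Ωe) : ℝ :=
  (1 - (s - ⌊s⌋₊)) * (X.K ⌊s⌋₊ ω / X.θ - ⌊s⌋₊ * X.θ) +
    (s - ⌊s⌋₊) * (X.K (⌊s⌋₊ + 1) ω / X.θ - (⌊s⌋₊ + 1 : ℕ) * X.θ)

/-- `T_s = B_s − W_s` -/
def T (s : ℝ) (ω : X.Ωe) (ωq : X.Ωq) : ℝ := X.B s ωq - X.W s ω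

/-- the quenched barrier probability
`p_t = ℙ_𝓛[∀ s ∈ [0,t], ξ₀ + T_s ≤ 0 and ξ₀ + T_t ∈ [ξ₀ − 1, ξ₀]]` -/
def p (ξ0 t : ℝ) (ω : X.Ωe) : ℝ :=
  (X.PL ω {ωq | (∀ s ∈ Icc (0 : ℝ) t, ξ0 + X.T s ω ωq ≤ 0) ∧
      ξ0 + X.T t ω ωq ∈ Icc (ξ0 - 1) ξ0}).toReal

/-- the (random) centering `m_n = (K_n − log p_n)/θ*` -/
def m (ξ0 : ℝ) (n : ℕ) (ω : X.Ωe) : ℝ :=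
  (X.K n ω - Real.log (X.p ξ0 n ω)) / X.θ

/-- the position `V(u)` of the particle indexed by `u`: the sum of the displacements
along its ancestral line -/
def V (u : List ℕ) (ωq : X.Ωq) : ℝ :=
  ∑ k ∈ Finset.range u.length, X.ξ (u.take (k + 1)) ωq

/-- the particles alive in generation `n`, given the environment -/
def alive (ω : X.Ωe) (n : ℕ) : Set (List ℕ) :=
  {u | u.length = n ∧ ∀ k < n, u.getD k 0 < X.L (k + 1) ω}

/-- the maximal displacement `M_n = max_{|u| = n} V(u)` -/
def M (n : ℕ) (ω : X.Ωe) (ωq : X.Ωq) : ℝ :=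
  sSup ((fun u => X.V u ωq) '' X.alive ω n)

end BRWre

/-!
Given the environment, `V(u)` is a sum of `n` independent standard Gaussians, so the Chernoff
bound at `t = -1` gives `ℙ_𝓛[V(u) ≤ b] ≤ e^{b + n/2}`, and a union bound over the
`𝓛_1 ⋯ 𝓛_n = exp (∑ log 𝓛_k)` particles of generation `n` gives
`ℙ_𝓛[min V ≤ b] ≤ exp (∑_{k ≤ n} log 𝓛_k + b + n/2)`. By Markov's inequality,
`∑_{k ≤ n} log 𝓛_k ≤ A n` outside an event of probability at most `𝔼[log 𝓛_1] / A ≤ ε`, and on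
that event `b = -(A + 1) n` makes the bound `e^{-n/2}`.
-/

open Real

namespace ProbabilityTheory

variable {Ω ι : Type*} [MeasurableSpace Ω] {μ : Measure Ω} [IsProbabilityMeasure μ]

lemma integrable_exp_mul_of_map_eq_gaussianReal {Y : Ω → ℝ} {m : ℝ} {v : NNReal}
    (hY : μ.map Y = gaussianReal m v) (t : ℝ) :
    Integrable (fun ω ↦ exp (t * Y ω)) μ := by
  rw [← mgf_pos_iff, mgf_gaussianReal hY]
  exact exp_pos _

lemma measureReal_sum_le_le_of_iIndepFun_gaussianReal [Fintype ι] {Y : ι → Ω → ℝ}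
    (hmeas : ∀ i, Measurable (Y i)) (hindep : iIndepFun Y μ)
    (hgauss : ∀ i, μ.map (Y i) = gaussianReal 0 1) (b : ℝ) :
    μ.real {ω | ∑ i, Y i ω ≤ b} ≤ exp (b + Fintype.card ι / 2) := by
  have hint := hindep.integrable_exp_mul_sum (t := -1) hmeas
    (s := Finset.univ) fun i _ ↦ integrable_exp_mul_of_map_eq_gaussianReal (hgauss i) _
  have hmgf : mgf (∑ i, Y i) μ (-1) = exp (Fintype.card ι / 2) := by
    rw [hindep.mgf_sum hmeas, Finset.prod_congr rfl fun i _ ↦ mgf_gaussianReal (hgauss i) (-1),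
      Finset.prod_const, Finset.card_univ, ← exp_nat_mul]
    norm_num
    ring
  calc μ.real {ω | ∑ i, Y i ω ≤ b}
      = μ.real {ω | (∑ i, Y i) ω ≤ b} := by simp only [Finset.sum_apply]
    _ ≤ exp (-(-1) * b) * mgf (∑ i, Y i) μ (-1) :=
        measure_le_le_exp_mul_mgf b (by norm_num) hint
    _ = exp (b + Fintype.card ι / 2) := by rw [hmgf, ← exp_add]; ring_nf

end ProbabilityTheory

lemma List.injective_take_succ {α : Type*} (u : List α) :
    Function.Injective fun k : Fin u.length ↦ u.take (k + 1) := by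
  intro a b h
  have := congrArg List.length h
  simp only [List.length_take] at this
  omega

namespace BRWre

variable (X : BRWre)

lemma V_eq_sum_fin (u : List ℕ) (ωq : X.Ωq) :
    X.V u ωq = ∑ k : Fin u.length, X.ξ (u.take (k + 1)) ωq :=
  (Fin.sum_univ_eq_sum_range (fun k ↦ X.ξ (u.take (k + 1)) ωq) _).symm

lemma measureReal_V_le (ω : X.Ωe) (u : List ℕ) (b : ℝ) :
    (X.PL ω).real {ωq | X.V u ωq ≤ b} ≤ exp (b + u.length / 2) := by
  simp_rw [V_eq_sum_fin]
  simpa using measureReal_sum_le_le_of_iIndepFun_gaussianReal (fun _ ↦ X.hξmeas _)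
    ((X.hξindep ω).precomp u.injective_take_succ) (fun _ ↦ X.hξgauss ω _) b

def aliveFinset (ω : X.Ωe) (n : ℕ) : Finset (List ℕ) :=
  (Fintype.piFinset fun k : Fin n ↦ Finset.range (X.L (k + 1) ω)).image List.ofFn

lemma coe_aliveFinset (ω : X.Ωe) (n : ℕ) : ↑(X.aliveFinset ω n) = X.alive ω n := by
  ext u
  simp only [aliveFinset, Finset.coe_image, Set.mem_image, Finset.mem_coe,
    Fintype.mem_piFinset, Finset.mem_range, alive, Set.mem_ofPred_eq]
  constructor
  · rintro ⟨f, hf, rfl⟩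
    refine ⟨List.length_ofFn, fun k hk ↦ ?_⟩
    rw [List.getD_eq_getElem _ 0 (by simpa using hk), List.getElem_ofFn]
    exact hf _
  · rintro ⟨hlen, hlt⟩
    refine ⟨fun k ↦ u.getD k 0, fun k ↦ hlt k (hlen ▸ k.isLt), ?_⟩
    refine List.ext_getElem (by simp [hlen]) fun i _ h ↦ ?_
    rw [List.getElem_ofFn]
    exact List.getD_eq_getElem u 0 h

lemma card_aliveFinset_le_exp (ω : X.Ωe) (n : ℕ) :
    ((X.aliveFinset ω n).card : ℝ) ≤ exp (∑ k ∈ Finset.range n, log (X.L (k + 1) ω)) := by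
  rw [aliveFinset, Finset.card_image_of_injective _ List.ofFn_injective, Fintype.card_piFinset,
    ← Fin.sum_univ_eq_sum_range (fun k ↦ log (X.L (k + 1) ω)), exp_sum]
  push_cast
  simp only [Finset.card_range]
  refine Finset.prod_le_prod (fun _ _ ↦ by positivity) fun k _ ↦ ?_
  rcases Nat.eq_zero_or_pos (X.L (k + 1) ω) with h | h
  · simp [h]
  · rw [exp_log (by exact_mod_cast h)]

lemma measureReal_exists_alive_V_le (ω : X.Ωe) (n : ℕ) (b : ℝ) :
    (X.PL ω).real {ωq | ∃ u ∈ X.alive ω n, X.V u ωq ≤ b} ≤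
      exp (∑ k ∈ Finset.range n, log (X.L (k + 1) ω) + b + n / 2) := by
  have hset : {ωq | ∃ u ∈ X.alive ω n, X.V u ωq ≤ b} =
      ⋃ u ∈ X.aliveFinset ω n, {ωq | X.V u ωq ≤ b} := by
    ext; simp [← coe_aliveFinset]
  have hlen : ∀ u ∈ X.aliveFinset ω n, u.length = n := fun u hu ↦
    ((X.coe_aliveFinset ω n) ▸ Finset.mem_coe.2 hu).1
  calc (X.PL ω).real {ωq | ∃ u ∈ X.alive ω n, X.V u ωq ≤ b}
      ≤ ∑ u ∈ X.aliveFinset ω n, (X.PL ω).real {ωq | X.V u ωq ≤ b} :=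
        hset ▸ measureReal_biUnion_finset_le _ _
    _ ≤ ∑ _u ∈ X.aliveFinset ω n, exp (b + n / 2) :=
        Finset.sum_le_sum fun u hu ↦ hlen u hu ▸ X.measureReal_V_le ω u b
    _ ≤ exp (∑ k ∈ Finset.range n, log (X.L (k + 1) ω)) * exp (b + n / 2) := by
        rw [Finset.sum_const, nsmul_eq_mul]
        gcongr
        exact X.card_aliveFinset_le_exp ω n
    _ = _ := by rw [← exp_add, add_assoc]

lemma measurable_log_L (k : ℕ) : Measurable fun ω ↦ log (X.L k ω) :=
  (Measurable.of_discrete (f := fun m : ℕ ↦ log m)).comp (X.hLmeas k)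

lemma identDistrib_log_L (k : ℕ) :
    IdentDistrib (fun ω ↦ log (X.L k ω)) (fun ω ↦ log (X.L 1 ω)) X.Pe X.Pe :=
  (X.hLident k).comp (Measurable.of_discrete (f := fun m : ℕ ↦ log m))

lemma integrable_log_L (k : ℕ) : Integrable (fun ω ↦ log (X.L k ω)) X.Pe :=
  (X.identDistrib_log_L k).integrable_iff.2 (X.hLvar.integrable one_le_two)

lemma integral_sum_log_L (n : ℕ) :
    ∫ ω, ∑ k ∈ Finset.range n, log (X.L (k + 1) ω) ∂X.Pe =
      n * ∫ ω, log (X.L 1 ω) ∂X.Pe := by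
  rw [integral_finsetSum _ fun k _ ↦ X.integrable_log_L (k + 1),
    Finset.sum_congr rfl fun k _ ↦ (X.identDistrib_log_L (k + 1)).integral_eq]
  simp

lemma measureReal_mul_lt_sum_log_L_le (n : ℕ) {A : ℝ} (hA : 0 < A) :
    X.Pe.real {ω | A * n < ∑ k ∈ Finset.range n, log (X.L (k + 1) ω)} ≤
      (∫ ω, log (X.L 1 ω) ∂X.Pe) / A := by
  rcases Nat.eq_zero_or_pos n with rfl | hn
  · simpa using div_nonneg (integral_nonneg fun ω ↦ log_natCast_nonneg _) hA.le
  have hAn : 0 < A * n := by positivity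
  have markov := mul_meas_ge_le_integral_of_nonneg
    (ae_of_all _ fun ω ↦ Finset.sum_nonneg fun k _ ↦ log_natCast_nonneg (X.L (k + 1) ω))
    (integrable_finsetSum (Finset.range n) fun k _ ↦ X.integrable_log_L (k + 1)) (A * n)
  rw [integral_sum_log_L] at markov
  calc X.Pe.real {ω | A * n < ∑ k ∈ Finset.range n, log (X.L (k + 1) ω)}
      ≤ X.Pe.real {ω | A * n ≤ ∑ k ∈ Finset.range n, log (X.L (k + 1) ω)} :=
        measureReal_mono (ofPred_subset_ofPred.2 fun _ ↦ le_of_lt)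
    _ ≤ n * (∫ ω, log (X.L 1 ω) ∂X.Pe) / (A * n) := (le_div_iff₀' hAn).2 markov
    _ = (∫ ω, log (X.L 1 ω) ∂X.Pe) / A := by field_simp

end BRWre

/-- Lemma on the minimum of the BRWre.
For all `ε > 0` there are `c'_ε, c''_ε > 0` such that for all `n ∈ ℕ`,
`ℙ[ℙ_𝓛[min_{|u| = n} V(u) ≤ −c'_ε n] ≤ e^{−c''_ε n}] ≥ 1 − ε`. -/
theorem brwre_min_bound (X : BRWre) :
    ∀ ε : ℝ, 0 < ε → ∃ c' c'' : ℝ, 0 < c' ∧ 0 < c'' ∧ ∀ n : ℕ,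
      1 - ε ≤ (X.Pe {ω |
        (X.PL ω {ωq | ∃ u ∈ X.alive ω n, X.V u ωq ≤ -c' * n}).toReal ≤
          Real.exp (-c'' * n)}).toReal := by
  intro ε hε
  set μ := ∫ ω, log (X.L 1 ω) ∂X.Pe
  have hμ : 0 ≤ μ := integral_nonneg fun ω ↦ log_natCast_nonneg _
  obtain ⟨A, hA, hμA⟩ : ∃ A > 0, μ ≤ ε * A :=
    ⟨μ / ε + 1, by positivity, by rw [mul_add, mul_div_cancel₀ _ hε.ne']; linarith⟩
  refine ⟨A + 1, 1 / 2, by positivity, by norm_num, fun n ↦ ?_⟩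
  set bad := {ω | A * n < ∑ k ∈ Finset.range n, log (X.L (k + 1) ω)}
  have hbad_meas : MeasurableSet bad := measurableSet_lt measurable_const <|
    Finset.measurable_sum _ fun k _ ↦ X.measurable_log_L (k + 1)
  have hbad : X.Pe.real bad ≤ ε := by
    refine (X.measureReal_mul_lt_sum_log_L_le n hA).trans ?_
    rwa [div_le_iff₀ hA]
  have hgood : badᶜ ⊆ {ω | (X.PL ω {ωq | ∃ u ∈ X.alive ω n, X.V u ωq ≤ -(A + 1) * n}).toReal ≤
      exp (-(1 / 2) * n)} := fun ω hω ↦ by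
    have hS : ∑ k ∈ Finset.range n, log (X.L (k + 1) ω) ≤ A * n := not_lt.1 hω
    refine (X.measureReal_exists_alive_V_le ω n _).trans (exp_le_exp.2 ?_)
    linarith
  calc 1 - ε ≤ 1 - X.Pe.real bad := by linarith
    _ = X.Pe.real badᶜ := (probReal_compl_eq_one_sub hbad_meas).symm
    _ ≤ _ := measureReal_mono hgood
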